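/- Define S(α) = ∑_{(n,m)∈ℤ²} [f(n+1,m) − f(n,m)]², where f(n,m) = exp(−(n²+m²+1)^α). Then S(α) → 0 as α → 0⁺. -/
import Mathlib

open Real Set Filter

lemma tele {f a : ℕ → ℝ} (hf0 : ∀ k, 0 ≤ f k) (ha0 : ∀ k, 0 ≤ a k)
    (hstep : ∀ k, f k ≤ a k - a (k+1)) : Summable f ∧ ∑' k, f k ≤ a 0 := by
  have key : ∀ n, ∑ i ∈ Finset.range n, f i ≤ a 0 := by
    intro n
    calc ∑ i ∈ Finset.range n, f i ≤ ∑ i ∈ Finset.range n, (a i - a (i+1)) :=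
          Finset.sum_le_sum (fun i _ => hstep i)
      _ = a 0 - a n := Finset.sum_range_sub' a n
      _ ≤ a 0 := by linarith [ha0 n]
  exact ⟨summable_of_sum_range_le hf0 key, Real.tsum_le_of_sum_range_le hf0 key⟩

lemma slope_step {g g' : ℝ → ℝ} (x : ℝ)
    (h : ∀ y ∈ Icc x (x+1), HasDerivAt g (g' y) y) :
    ∃ c ∈ Ioo x (x+1), g (x+1) - g x = g' c := by
  have hlt : x < x + 1 := by linarith
  have hc : ContinuousOn g (Icc x (x+1)) :=
    fun y hy => ((h y hy).continuousAt).continuousWithinAt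
  have hd : ∀ y ∈ Ioo x (x+1), HasDerivAt g (g' y) y :=
    fun y hy => h y (Ioo_subset_Icc_self hy)
  obtain ⟨c, hc', he⟩ := exists_hasDerivAt_eq_slope g g' hlt hc hd
  refine ⟨c, hc', ?_⟩
  rw [he]
  have h1 : x + 1 - x = 1 := by ring
  rw [h1, div_one]

lemma sum_B {s : ℝ} (hs : 1 ≤ s) :
    Summable (fun k : ℕ => (((k:ℝ)+1)^2+s) ^ (-(3/4) : ℝ)) ∧
      ∑' k : ℕ, (((k:ℝ)+1)^2+s) ^ (-(3/4):ℝ) ≤ 4 * s ^ (-(1/4):ℝ) := by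
  have hs0 : (0:ℝ) < s := by linarith
  set σ : ℝ := s ^ ((1:ℝ)/2) with hσdef
  have hσ1 : 1 ≤ σ := Real.one_le_rpow hs (by norm_num)
  have hσ0 : 0 < σ := by linarith
  have hσsq : σ ^ 2 = s := by
    rw [hσdef, ← Real.rpow_natCast (s ^ ((1:ℝ)/2)) 2, ← Real.rpow_mul hs0.le]
    norm_num
  set a : ℕ → ℝ := fun k => 4 * ((k:ℝ) + σ) ^ (-(1/2) : ℝ) with ha
  have hf0 : ∀ k : ℕ, 0 ≤ (((k:ℝ)+1)^2+s) ^ (-(3/4) : ℝ) := by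
    intro k
    apply Real.rpow_nonneg
    positivity
  have ha0 : ∀ k, 0 ≤ a k := by
    intro k
    apply mul_nonneg (by norm_num)
    apply Real.rpow_nonneg
    positivity
  have hstep : ∀ k : ℕ, (((k:ℝ)+1)^2+s) ^ (-(3/4) : ℝ) ≤ a k - a (k+1) := by
    intro k
    have hk0 : (0:ℝ) ≤ (k:ℝ) := Nat.cast_nonneg k
    -- derivative of A(y) = 4*(y+σ)^(-1/2)
    have hder : ∀ y ∈ Icc (k:ℝ) ((k:ℝ)+1),
        HasDerivAt (fun y : ℝ => 4 * (y + σ) ^ (-(1/2) : ℝ))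
          (4 * (1 * (-(1/2)) * (y + σ) ^ (-(1/2) - 1 : ℝ))) y := by
      intro y hy
      have hy0 : (0:ℝ) < y + σ := by
        have := hy.1
        linarith
      exact (((hasDerivAt_id y).add_const σ).rpow_const (Or.inl hy0.ne')).const_mul 4
    obtain ⟨c, hc, hAc⟩ := slope_step (k:ℝ) hder
    have hc0 : (0:ℝ) < c + σ := by
      have := hc.1; linarith
    have hstep1 : a k - a (k+1) = 2 * (c + σ) ^ (-(3/2) : ℝ) := by
      have hcast : ((k+1 : ℕ) : ℝ) = (k:ℝ) + 1 := by push_cast; ring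
      have hexp : (-(1/2) - 1 : ℝ) = -(3/2) := by norm_num
      rw [hexp] at hAc
      have hpow : (4 : ℝ) * (1 * (-(1/2)) * (c + σ) ^ (-(3/2) : ℝ))
          = -(2 * (c + σ) ^ (-(3/2) : ℝ)) := by ring
      rw [hpow] at hAc
      rw [ha]
      simp only [hcast]
      linarith [hAc]
    rw [hstep1]
    -- now  ((k+1)^2+s)^(-3/4) ≤ 2 (c+σ)^(-3/2)
    set t : ℝ := (k:ℝ) + 1 with htdef
    have ht1 : (1:ℝ) ≤ t := by rw [htdef]; linarith
    have hct : c + σ ≤ t + σ := by have := hc.2; linarith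
    have h1 : (t + σ) ^ (-(3/2) : ℝ) ≤ (c + σ) ^ (-(3/2) : ℝ) :=
      Real.rpow_le_rpow_of_nonpos hc0 hct (by norm_num)
    have h2 : ((t + σ)^2) ^ (-(3/4) : ℝ) = (t + σ) ^ (-(3/2) : ℝ) := by
      rw [← Real.rpow_natCast (t + σ) 2, ← Real.rpow_mul (by positivity)]
      norm_num
    have h3 : (2 * (t^2 + s)) ^ (-(3/4) : ℝ) ≤ ((t + σ)^2) ^ (-(3/4) : ℝ) := by
      apply Real.rpow_le_rpow_of_nonpos (by positivity) _ (by norm_num)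
      nlinarith [sq_nonneg (t - σ), hσsq]
    have h4 : (2 * (t^2 + s)) ^ (-(3/4) : ℝ)
        = (2:ℝ) ^ (-(3/4) : ℝ) * (t^2 + s) ^ (-(3/4) : ℝ) := by
      rw [Real.mul_rpow (by norm_num) (by positivity)]
    have h5 : (1/2 : ℝ) ≤ (2:ℝ) ^ (-(3/4) : ℝ) := by
      have : ((2:ℝ)) ^ (-(1:ℝ)) ≤ (2:ℝ) ^ (-(3/4) : ℝ) :=
        Real.rpow_le_rpow_of_exponent_le (by norm_num) (by norm_num)
      rwa [Real.rpow_neg_one, show ((2:ℝ))⁻¹ = 1/2 by norm_num] at this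
    have h6 : (0:ℝ) ≤ (t^2 + s) ^ (-(3/4) : ℝ) := Real.rpow_nonneg (by positivity) _
    nlinarith [h1, h2 ▸ h3, h4, h5, h6]
  obtain ⟨hsum, hle⟩ := tele hf0 ha0 hstep
  refine ⟨hsum, hle.trans ?_⟩
  have : a 0 = 4 * s ^ (-(1/4) : ℝ) := by
    rw [ha]
    simp only [Nat.cast_zero, zero_add]
    rw [hσdef, ← Real.rpow_mul hs0.le]
    norm_num
  rw [this]

lemma sum_C {α : ℝ} (hα0 : 0 < α) (hα8 : α ≤ 1/8) :
    Summable (fun k : ℕ => ((k:ℝ)+1) ^ (4*α-1) * Real.exp (-(((k:ℝ)+1) ^ (2*α))/3)) ∧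
      ∑' k : ℕ, ((k:ℝ)+1) ^ (4*α-1) * Real.exp (-(((k:ℝ)+1) ^ (2*α))/3) ≤ 7/α := by
  set F : ℝ → ℝ := fun x => (x ^ (2*α) + 3) * Real.exp (-(x ^ (2*α))/3) with hF
  set D : ℝ → ℝ := fun y => (2*α * y ^ (2*α-1)) * Real.exp (-(y ^ (2*α))/3)
      + (y ^ (2*α) + 3) * (Real.exp (-(y ^ (2*α))/3) * (-(2*α * y ^ (2*α-1))/3)) with hD
  have hder : ∀ y : ℝ, 0 < y → HasDerivAt F (D y) y := by
    intro y hy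
    have hu : HasDerivAt (fun x : ℝ => x ^ (2*α)) (2*α * y ^ (2*α-1)) y :=
      Real.hasDerivAt_rpow_const (Or.inl hy.ne')
    have h2 : HasDerivAt (fun x : ℝ => Real.exp (-(x ^ (2*α))/3))
        (Real.exp (-(y ^ (2*α))/3) * (-(2*α * y ^ (2*α-1))/3)) y :=
      ((hu.neg).div_const 3).exp
    exact (hu.add_const 3).mul h2
  set f : ℕ → ℝ := fun k => ((k:ℝ)+2) ^ (4*α-1) * Real.exp (-(((k:ℝ)+2) ^ (2*α))/3) with hf
  set a : ℕ → ℝ := fun k => (3/(2*α)) * F ((k:ℝ)+1) with haa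
  have hf0 : ∀ k, 0 ≤ f k := by
    intro k
    apply mul_nonneg (Real.rpow_nonneg (by positivity) _) (Real.exp_nonneg _)
  have hFnn : ∀ x : ℝ, 0 ≤ x → 0 ≤ F x := by
    intro x hx
    apply mul_nonneg _ (Real.exp_nonneg _)
    have := Real.rpow_nonneg hx (2*α)
    linarith
  have ha0 : ∀ k, 0 ≤ a k := by
    intro k
    apply mul_nonneg (by positivity) (hFnn _ (by positivity))
  have hstep : ∀ k, f k ≤ a k - a (k+1) := by
    intro k
    obtain ⟨c, hc, hFc⟩ := slope_step ((k:ℝ)+1) (fun y hy => hder y (by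
      have := hy.1
      have : (0:ℝ) < (k:ℝ)+1 := by positivity
      linarith [hy.1]))
    have hc0 : (0:ℝ) < c := by
      have h1 : (0:ℝ) < (k:ℝ)+1 := by positivity
      linarith [hc.1]
    have hck2 : c ≤ (k:ℝ)+2 := by linarith [hc.2]
    have hcsum : c ^ (2*α-1) * c ^ (2*α) = c ^ (4*α-1) := by
      rw [← Real.rpow_add hc0]
      congr 1
      ring
    have hDval : -(D c) = (2*α/3) * (c ^ (4*α-1)) * Real.exp (-(c ^ (2*α))/3) := by
      rw [hD, ← hcsum]
      ring
    have hbound : (2*α/3) * f k ≤ -(D c) := by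
      rw [hDval, hf]
      have b1 : ((k:ℝ)+2) ^ (4*α-1) ≤ c ^ (4*α-1) :=
        Real.rpow_le_rpow_of_nonpos hc0 hck2 (by linarith)
      have b2 : Real.exp (-(((k:ℝ)+2) ^ (2*α))/3) ≤ Real.exp (-(c ^ (2*α))/3) := by
        apply Real.exp_le_exp.mpr
        have : c ^ (2*α) ≤ ((k:ℝ)+2) ^ (2*α) :=
          Real.rpow_le_rpow hc0.le hck2 (by positivity)
        linarith
      have e1 : (0:ℝ) ≤ ((k:ℝ)+2) ^ (4*α-1) := Real.rpow_nonneg (by positivity) _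
      have e2 : (0:ℝ) ≤ Real.exp (-(((k:ℝ)+2) ^ (2*α))/3) := Real.exp_nonneg _
      have := mul_le_mul b1 b2 e2 (Real.rpow_nonneg hc0.le _)
      nlinarith
    have hcast : ((k+1 : ℕ) : ℝ) = (k:ℝ) + 1 := by push_cast; ring
    have hak : a k - a (k+1) = (3/(2*α)) * (-(D c)) := by
      rw [haa]
      simp only [hcast]
      have hx2 : (k:ℝ)+1+1 = (k:ℝ)+2 := by ring
      rw [hx2, ← hFc]
      ring
    rw [hak]
    have h3 : (3/(2*α)) * ((2*α/3) * f k) ≤ (3/(2*α)) * (-(D c)) := by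
      apply mul_le_mul_of_nonneg_left hbound (by positivity)
    calc f k = (3/(2*α)) * ((2*α/3) * f k) := by field_simp
      _ ≤ (3/(2*α)) * (-(D c)) := h3
  obtain ⟨hsumf, hlef⟩ := tele hf0 ha0 hstep
  have ha0v : a 0 ≤ 6/α := by
    rw [haa, hF]
    simp only [Nat.cast_zero, zero_add]
    rw [Real.one_rpow]
    have hexp : Real.exp (-(1:ℝ)/3) ≤ 1 := Real.exp_le_one_iff.mpr (by norm_num)
    rw [show (6:ℝ)/α = 3/(2*α)*4 by field_simp; ring]
    apply mul_le_mul_of_nonneg_left _ (by positivity)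
    nlinarith [Real.exp_nonneg (-(1:ℝ)/3)]
  -- now shift
  set h : ℕ → ℝ := fun k => ((k:ℝ)+1) ^ (4*α-1) * Real.exp (-(((k:ℝ)+1) ^ (2*α))/3) with hh
  have hshift : (fun n : ℕ => h (n+1)) = f := by
    funext n
    rw [hh, hf]
    push_cast
    ring_nf
  have hsumh : Summable h := (summable_nat_add_iff 1).mp (by rw [hshift]; exact hsumf)
  have h0v : h 0 ≤ 1 := by
    rw [hh]
    simp only [Nat.cast_zero, zero_add]
    rw [Real.one_rpow, Real.one_rpow, one_mul]
    exact Real.exp_le_one_iff.mpr (by norm_num)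
  refine ⟨hsumh, ?_⟩
  rw [Summable.tsum_eq_zero_add hsumh]
  have : ∑' k : ℕ, h (k+1) ≤ 6/α := by rw [hshift]; exact hlef.trans ha0v
  have h1α : (1:ℝ) ≤ 1/α := by
    rw [le_div_iff₀ hα0]; linarith
  calc h 0 + ∑' k : ℕ, h (k+1) ≤ 1 + 6/α := add_le_add h0v this
    _ ≤ 7/α := by
      have e : (7:ℝ)/α = 1/α + 6/α := by ring
      linarith

lemma int_sum {F : ℤ → ℝ} {B : ℝ} (h0 : ∀ n, 0 ≤ F n) (hev : ∀ n : ℤ, F (-n) = F n)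
    (hs : Summable (fun k : ℕ => F ((k:ℤ)+1))) (hb : ∑' k : ℕ, F ((k:ℤ)+1) ≤ B) :
    Summable F ∧ ∑' n : ℤ, F n ≤ F 0 + 2 * B := by
  have hnat : Summable (fun k : ℕ => F (k:ℤ)) := by
    rw [← summable_nat_add_iff 1]
    have e : (fun n : ℕ => F (((n + 1 : ℕ) : ℤ))) = fun n : ℕ => F ((n:ℤ)+1) := by
      funext n
      congr 1
    rw [e]
    exact hs
  have hneg : Summable (fun k : ℕ => F (-((k:ℤ)+1))) := by
    have e : (fun k : ℕ => F (-((k:ℤ)+1))) = fun k : ℕ => F ((k:ℤ)+1) := by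
      funext k
      rw [hev]
    rw [e]
    exact hs
  have hsum : Summable F := Summable.of_nat_of_neg_add_one hnat hneg
  refine ⟨hsum, ?_⟩
  rw [tsum_of_nat_of_neg_add_one hnat hneg]
  have e1 : ∑' k : ℕ, F (k:ℤ) = F 0 + ∑' k : ℕ, F ((k:ℤ)+1) := by
    rw [Summable.tsum_eq_zero_add hnat]
    simp only [Nat.cast_zero]
    congr 1
  have e2 : ∑' k : ℕ, F (-((k:ℤ)+1)) = ∑' k : ℕ, F ((k:ℤ)+1) := by
    apply tsum_congr
    intro k
    rw [hev]
  rw [e1, e2]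
  linarith

set_option maxHeartbeats 1000000 in
lemma pointA {α : ℝ} (hα0 : 0 < α) (hα8 : α ≤ 1/8) (n m : ℤ) :
    (Real.exp (-((((n:ℝ)+1)^2 + (m:ℝ)^2 + 1) ^ α))
      - Real.exp (-(((n:ℝ)^2 + (m:ℝ)^2 + 1) ^ α))) ^ 2
    ≤ 36 * α^2 * (((n:ℝ)^2 + (m:ℝ)^2 + 1) ^ (2*α-1))
        * Real.exp (-((((n:ℝ)^2 + (m:ℝ)^2 + 1) ^ α))/3) := by
  have hs1 : (1:ℝ) ≤ (m:ℝ)^2 + 1 := by nlinarith [sq_nonneg ((m:ℝ))]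
  set s : ℝ := (m:ℝ)^2 + 1 with hsdef
  have hb1 : (1:ℝ) ≤ (n:ℝ)^2 + s := by nlinarith [sq_nonneg ((n:ℝ))]
  set b : ℝ := (n:ℝ)^2 + s with hbdef
  have hb0 : (0:ℝ) < b := by linarith
  have hder : ∀ y : ℝ, HasDerivAt (fun x : ℝ => Real.exp (-((x^2 + s) ^ α)))
      (Real.exp (-((y^2 + s) ^ α)) * (-((2*y) * α * (y^2+s) ^ (α-1)))) y := by
    intro y
    have h1 : HasDerivAt (fun x : ℝ => x^2 + s) (2*y) y := by
      simpa using (hasDerivAt_pow 2 y).add_const s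
    have hpos : (0:ℝ) < y^2 + s := by nlinarith [sq_nonneg y]
    have h2 : HasDerivAt (fun x : ℝ => (x^2+s) ^ α) ((2*y) * α * (y^2+s) ^ (α-1)) y :=
      h1.rpow_const (Or.inl hpos.ne')
    exact (h2.neg).exp
  obtain ⟨c, hc, hgc⟩ := slope_step (n:ℝ) (fun y _ => hder y)
  have ht1 : (1:ℝ) ≤ c^2 + s := by nlinarith [sq_nonneg c]
  set t : ℝ := c^2 + s with htdef
  have ht0 : (0:ℝ) < t := by linarith
  -- goal in terms of g
  have eL : (((n:ℝ)+1)^2 + (m:ℝ)^2 + 1) = ((n:ℝ)+1)^2 + s := by rw [hsdef]; ring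
  have eR : ((n:ℝ)^2 + (m:ℝ)^2 + 1) = b := by rw [hbdef, hsdef]; ring
  rw [eL, eR]
  have hΔ : Real.exp (-((((n:ℝ)+1)^2 + s) ^ α)) - Real.exp (-(b ^ α))
      = Real.exp (-(t ^ α)) * (-((2*c) * α * t ^ (α-1))) := hgc
  rw [hΔ]
  -- lower bound for t : b/3 ≤ t
  have hq : b/3 ≤ t := by
    rw [htdef, hbdef]
    rcases le_or_gt 0 n with h | h
    · have hn0 : (0:ℝ) ≤ (n:ℝ) := by exact_mod_cast h
      have := hc.1
      nlinarith
    · have hn1 : (n:ℝ) ≤ -1 := by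
        have : n ≤ -1 := by omega
        exact_mod_cast this
      have hc2 : c < (n:ℝ) + 1 := hc.2
      have f1 : (0:ℝ) < ((n:ℝ)+1) - c := by linarith
      have f2 : (0:ℝ) < -(c + (n:ℝ) + 1) := by linarith
      nlinarith [mul_pos f1 f2, sq_nonneg ((n:ℝ)+1), sq_nonneg ((n:ℝ)+2)]
  -- exp bound
  have hba : (0:ℝ) ≤ b ^ α := Real.rpow_nonneg hb0.le α
  have htb : b ^ α / 3 ≤ t ^ α := by
    have h1 : (b/3) ^ α ≤ t ^ α := Real.rpow_le_rpow (by positivity) hq hα0.le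
    have h2 : (b/3) ^ α = b ^ α / (3:ℝ) ^ α := Real.div_rpow hb0.le (by norm_num : (0:ℝ) ≤ 3) _
    have h3 : (3:ℝ) ^ α ≤ 3 := by
      calc (3:ℝ) ^ α ≤ (3:ℝ) ^ (1:ℝ) :=
            Real.rpow_le_rpow_of_exponent_le (by norm_num) (by linarith)
        _ = 3 := Real.rpow_one 3
    have h4 : b ^ α / 3 ≤ b ^ α / (3:ℝ) ^ α :=
      div_le_div_of_nonneg_left hba (by positivity) h3
    linarith [h2 ▸ h1]
  have hexp : Real.exp (-(t ^ α)) ≤ Real.exp (-(b ^ α)/3) := by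
    apply Real.exp_le_exp.mpr
    linarith
  -- power bound
  have hpow : t ^ (α - 1/2) ≤ 3 * b ^ (α - 1/2) := by
    have h1 : t ^ (α - 1/2) ≤ (b/3) ^ (α - 1/2) :=
      Real.rpow_le_rpow_of_nonpos (by positivity) hq (by linarith)
    have h2 : (b/3) ^ (α - 1/2) = b ^ (α - 1/2) / (3:ℝ) ^ (α - 1/2) :=
      Real.div_rpow hb0.le (by norm_num : (0:ℝ) ≤ 3) _
    have h3 : (1/3 : ℝ) ≤ (3:ℝ) ^ (α - 1/2) := by
      calc (1/3 : ℝ) = (3:ℝ) ^ (-1 : ℝ) := by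
            rw [Real.rpow_neg_one]; norm_num
        _ ≤ (3:ℝ) ^ (α - 1/2) :=
            Real.rpow_le_rpow_of_exponent_le (by norm_num) (by linarith)
    have h4 : b ^ (α - 1/2) / (3:ℝ) ^ (α - 1/2) ≤ b ^ (α - 1/2) / (1/3) :=
      div_le_div_of_nonneg_left (Real.rpow_nonneg hb0.le _) (by norm_num) h3
    have h5 : b ^ (α - 1/2) / (1/3 : ℝ) = 3 * b ^ (α - 1/2) := by ring
    linarith [h2 ▸ h1]
  -- |c| ≤ t^(1/2)
  have hcabs : |c| ≤ t ^ ((1:ℝ)/2) := by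
    rw [← Real.sqrt_eq_rpow t, ← Real.sqrt_sq_eq_abs]
    apply Real.sqrt_le_sqrt
    rw [htdef]
    linarith
  -- assemble |D c| bound
  have habs : |Real.exp (-(t ^ α)) * (-((2*c) * α * t ^ (α-1)))|
      ≤ 6 * α * b ^ (α - 1/2) * Real.exp (-(b ^ α)/3) := by
    have e1 : |Real.exp (-(t ^ α)) * (-((2*c) * α * t ^ (α-1)))|
        = Real.exp (-(t ^ α)) * (2 * |c| * α * t ^ (α-1)) := by
      have hX : (0:ℝ) ≤ t ^ (α-1) := Real.rpow_nonneg ht0.le _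
      rw [abs_mul, abs_neg, Real.abs_exp, abs_mul, abs_mul, abs_mul,
        abs_of_nonneg hα0.le, abs_of_nonneg hX]
      norm_num
    rw [e1]
    have e2 : 2 * |c| * α * t ^ (α-1) ≤ 2 * α * t ^ (α - 1/2) := by
      have h1 : 2 * |c| * α * t ^ (α-1) ≤ 2 * (t ^ ((1:ℝ)/2)) * α * t ^ (α-1) := by
        apply mul_le_mul_of_nonneg_right _ (Real.rpow_nonneg ht0.le _)
        apply mul_le_mul_of_nonneg_right _ hα0.le
        nlinarith [hcabs]
      have h2 : 2 * (t ^ ((1:ℝ)/2)) * α * t ^ (α-1) = 2 * α * (t ^ ((1:ℝ)/2) * t ^ (α-1)) := by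
        ring
      have h3 : t ^ ((1:ℝ)/2) * t ^ (α-1) = t ^ (α - 1/2) := by
        rw [← Real.rpow_add ht0]
        congr 1
        ring
      rw [h2, h3] at h1
      exact h1
    calc Real.exp (-(t ^ α)) * (2 * |c| * α * t ^ (α-1))
        ≤ Real.exp (-(b ^ α)/3) * (2 * α * t ^ (α - 1/2)) := by
          apply mul_le_mul hexp e2 _ (Real.exp_nonneg _)
          positivity
      _ ≤ Real.exp (-(b ^ α)/3) * (2 * α * (3 * b ^ (α - 1/2))) := by
          apply mul_le_mul_of_nonneg_left _ (Real.exp_nonneg _)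
          apply mul_le_mul_of_nonneg_left hpow (by positivity)
      _ = 6 * α * b ^ (α - 1/2) * Real.exp (-(b ^ α)/3) := by ring
  -- square it
  have hsq : (Real.exp (-(t ^ α)) * (-((2*c) * α * t ^ (α-1)))) ^ 2
      ≤ (6 * α * b ^ (α - 1/2) * Real.exp (-(b ^ α)/3)) ^ 2 := by
    rw [← sq_abs]
    apply pow_le_pow_left₀ (abs_nonneg _) habs
  have hx1 : (b ^ (α - 1/2 : ℝ))^2 = b ^ (2*α-1) := by
    rw [sq, ← Real.rpow_add hb0]
    congr 1
    ring
  have hx2 : (Real.exp (-(b ^ α)/3))^2 ≤ Real.exp (-(b ^ α)/3) := by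
    have h1 : Real.exp (-(b ^ α)/3) ≤ 1 := Real.exp_le_one_iff.mpr (by linarith)
    calc (Real.exp (-(b ^ α)/3))^2
        = Real.exp (-(b ^ α)/3) * Real.exp (-(b ^ α)/3) := sq _
      _ ≤ 1 * Real.exp (-(b ^ α)/3) := mul_le_mul_of_nonneg_right h1 (Real.exp_nonneg _)
      _ = Real.exp (-(b ^ α)/3) := one_mul _
  have hx3 : (6 * α * b ^ (α - 1/2) * Real.exp (-(b ^ α)/3)) ^ 2
      = 36 * α^2 * b ^ (2*α-1) * (Real.exp (-(b ^ α)/3))^2 := by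
    rw [← hx1]
    ring
  have hx4 : 36 * α^2 * b ^ (2*α-1) * (Real.exp (-(b ^ α)/3))^2
      ≤ 36 * α^2 * b ^ (2*α-1) * Real.exp (-(b ^ α)/3) := by
    apply mul_le_mul_of_nonneg_left hx2
    positivity
  calc (Real.exp (-(t ^ α)) * (-((2*c) * α * t ^ (α-1)))) ^ 2
      ≤ (6 * α * b ^ (α - 1/2) * Real.exp (-(b ^ α)/3)) ^ 2 := hsq
    _ = 36 * α^2 * b ^ (2*α-1) * (Real.exp (-(b ^ α)/3))^2 := hx3
    _ ≤ 36 * α^2 * b ^ (2*α-1) * Real.exp (-(b ^ α)/3) := hx4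

lemma sum_B_int {s : ℝ} (hs : 1 ≤ s) :
    Summable (fun m : ℤ => ((m:ℝ)^2+s) ^ (-(3/4) : ℝ)) ∧
      ∑' m : ℤ, ((m:ℝ)^2+s) ^ (-(3/4):ℝ) ≤ 9 * s ^ (-(1/4):ℝ) := by
  have hs0 : (0:ℝ) < s := by linarith
  obtain ⟨hsum, hle⟩ := sum_B hs
  have hcast : (fun k : ℕ => ((((k:ℤ)+1 : ℤ)):ℝ)) = fun k : ℕ => ((k:ℝ)+1) := by
    funext k; push_cast; ring
  have hcong : (fun k : ℕ => (((((k:ℤ)+1 : ℤ)):ℝ)^2+s) ^ (-(3/4) : ℝ))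
      = fun k : ℕ => (((k:ℝ)+1)^2+s) ^ (-(3/4) : ℝ) := by
    funext k; congr 2; push_cast; ring
  have h0 : ∀ m : ℤ, 0 ≤ ((m:ℝ)^2+s) ^ (-(3/4) : ℝ) :=
    fun m => Real.rpow_nonneg (by positivity) _
  have hev : ∀ m : ℤ, (((-m:ℤ):ℝ)^2+s) ^ (-(3/4) : ℝ) = ((m:ℝ)^2+s) ^ (-(3/4) : ℝ) := by
    intro m; congr 2; push_cast; ring
  obtain ⟨hS, hB⟩ := int_sum (B := 4 * s ^ (-(1/4):ℝ)) h0 hev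
    (by rw [hcong]; exact hsum) (by rw [hcong]; exact hle)
  refine ⟨hS, hB.trans ?_⟩
  have hF0 : (((0:ℤ):ℝ)^2+s) ^ (-(3/4) : ℝ) ≤ s ^ (-(1/4):ℝ) := by
    have e : (((0:ℤ):ℝ)^2+s) = s := by push_cast; ring
    rw [e]
    exact Real.rpow_le_rpow_of_exponent_le hs (by norm_num)
  have hx : (0:ℝ) ≤ s ^ (-(1/4):ℝ) := Real.rpow_nonneg hs0.le _
  linarith

lemma sum_C_int {α : ℝ} (hα0 : 0 < α) (hα8 : α ≤ 1/8) :
    Summable (fun n : ℤ => ((n:ℝ)^2+1) ^ (2*α-1/2) * Real.exp (-(((n:ℝ)^2+1) ^ α)/3)) ∧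
      ∑' n : ℤ, ((n:ℝ)^2+1) ^ (2*α-1/2) * Real.exp (-(((n:ℝ)^2+1) ^ α)/3) ≤ 15/α := by
  obtain ⟨hsumh, hleh⟩ := sum_C hα0 hα8
  set F : ℤ → ℝ := fun n => ((n:ℝ)^2+1) ^ (2*α-1/2) * Real.exp (-(((n:ℝ)^2+1) ^ α)/3)
    with hFdef
  have h0 : ∀ n, 0 ≤ F n :=
    fun n => mul_nonneg (Real.rpow_nonneg (by positivity) _) (Real.exp_nonneg _)
  have hev : ∀ n : ℤ, F (-n) = F n := by
    intro n; rw [hFdef]; simp only [Int.cast_neg, neg_sq]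
  -- comparison on ℕ
  have hcomp : ∀ k : ℕ, F ((k:ℤ)+1)
      ≤ ((k:ℝ)+1) ^ (4*α-1) * Real.exp (-(((k:ℝ)+1) ^ (2*α))/3) := by
    intro k
    set x : ℝ := (k:ℝ)+1 with hx
    have hx1 : (1:ℝ) ≤ x := by
      rw [hx]
      have : (0:ℝ) ≤ (k:ℝ) := Nat.cast_nonneg k
      linarith
    have hx0 : (0:ℝ) < x := by linarith
    have ecast : (((k:ℤ)+1 : ℤ):ℝ) = x := by rw [hx]; push_cast; ring
    have eF : F ((k:ℤ)+1) = (x^2+1) ^ (2*α-1/2) * Real.exp (-((x^2+1) ^ α)/3) := by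
      simp only [hFdef]
      rw [ecast]
    rw [eF]
    have hsq : (x:ℝ)^2 ≤ x^2 + 1 := by linarith
    have hxx : (0:ℝ) < x^2 := by positivity
    have p1 : (x^2+1) ^ (2*α-1/2) ≤ x ^ (4*α-1) := by
      have h1 : (x^2+1) ^ (2*α-1/2) ≤ (x^2) ^ (2*α-1/2) :=
        Real.rpow_le_rpow_of_nonpos hxx hsq (by linarith)
      have h2 : ((x^2 : ℝ)) ^ (2*α-1/2) = x ^ (4*α-1) := by
        rw [← Real.rpow_natCast x 2, ← Real.rpow_mul hx0.le]
        congr 1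
        push_cast
        ring
      linarith [h2 ▸ h1]
    have p2 : Real.exp (-((x^2+1) ^ α)/3) ≤ Real.exp (-(x ^ (2*α))/3) := by
      apply Real.exp_le_exp.mpr
      have h1 : (x^2 : ℝ) ^ α ≤ (x^2+1) ^ α := Real.rpow_le_rpow (by positivity) hsq hα0.le
      have h2 : ((x^2 : ℝ)) ^ α = x ^ (2*α) := by
        rw [← Real.rpow_natCast x 2, ← Real.rpow_mul hx0.le]
        norm_num
      have := h2 ▸ h1
      linarith
    exact mul_le_mul p1 p2 (Real.exp_nonneg _) (Real.rpow_nonneg hx0.le _)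
  have hnn : ∀ k : ℕ, 0 ≤ F ((k:ℤ)+1) := fun k => h0 _
  have hsumF : Summable (fun k : ℕ => F ((k:ℤ)+1)) :=
    Summable.of_nonneg_of_le hnn hcomp hsumh
  have hleF : ∑' k : ℕ, F ((k:ℤ)+1) ≤ 7/α :=
    (Summable.tsum_le_tsum hcomp hsumF hsumh).trans hleh
  obtain ⟨hS, hB⟩ := int_sum h0 hev hsumF hleF
  refine ⟨hS, hB.trans ?_⟩
  have hF0 : F 0 ≤ 1 := by
    have e : F 0 = Real.exp (-(1:ℝ)/3) := by
      simp only [hFdef, Int.cast_zero]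
      norm_num [Real.one_rpow]
    rw [e]
    exact Real.exp_le_one_iff.mpr (by norm_num)
  have h1α : (1:ℝ) ≤ 1/α := by rw [le_div_iff₀ hα0]; linarith
  have e : (15:ℝ)/α = 1/α + 2 * (7/α) := by ring
  linarith

set_option maxHeartbeats 1000000 in
lemma main_bound {α : ℝ} (hα0 : 0 < α) (hα8 : α ≤ 1/8) :
    (∑' p : ℤ × ℤ,
        (Real.exp (-((((p.1 : ℝ) + 1) ^ 2 + (p.2 : ℝ) ^ 2 + 1) ^ α))
          - Real.exp (-(((p.1 : ℝ) ^ 2 + (p.2 : ℝ) ^ 2 + 1) ^ α))) ^ 2)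
      ≤ 4860 * α := by
  set G : ℤ × ℤ → ℝ := fun p =>
    36 * α^2 * (((p.1:ℝ)^2 + (p.2:ℝ)^2 + 1) ^ (2*α-1))
      * Real.exp (-((((p.1:ℝ)^2 + (p.2:ℝ)^2 + 1) ^ α))/3) with hGdef
  have hG0 : ∀ p, 0 ≤ G p := by
    intro p
    apply mul_nonneg (mul_nonneg (by positivity) (Real.rpow_nonneg (by positivity) _))
      (Real.exp_nonneg _)
  -- inner sums
  have inner : ∀ n : ℤ, Summable (fun m : ℤ => G (n, m)) ∧
      ∑' m : ℤ, G (n, m) ≤ 324 * α^2 *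
        (((n:ℝ)^2+1) ^ (2*α-1/2) * Real.exp (-(((n:ℝ)^2+1) ^ α)/3)) := by
    intro n
    have hs1 : (1:ℝ) ≤ (n:ℝ)^2 + 1 := by nlinarith [sq_nonneg ((n:ℝ))]
    set s : ℝ := (n:ℝ)^2 + 1 with hsdef
    have hs0 : (0:ℝ) < s := by linarith
    obtain ⟨hBs, hBl⟩ := sum_B_int hs1
    set c0 : ℝ := 36 * α^2 * s ^ (2*α-1/4) * Real.exp (-(s ^ α)/3) with hc0def
    have hc00 : 0 ≤ c0 := by
      apply mul_nonneg (mul_nonneg (by positivity) (Real.rpow_nonneg hs0.le _))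
        (Real.exp_nonneg _)
    have hcomp : ∀ m : ℤ, G (n, m) ≤ c0 * ((m:ℝ)^2+s) ^ (-(3/4) : ℝ) := by
      intro m
      have hb1 : (1:ℝ) ≤ (m:ℝ)^2 + s := by nlinarith [sq_nonneg ((m:ℝ))]
      have hb0 : (0:ℝ) < (m:ℝ)^2 + s := by linarith
      have hsb : s ≤ (m:ℝ)^2 + s := by nlinarith [sq_nonneg ((m:ℝ))]
      have eG : G (n, m) = 36 * α^2 * (((m:ℝ)^2+s) ^ (2*α-1))
          * Real.exp (-((((m:ℝ)^2+s) ^ α))/3) := by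
        simp only [hGdef]
        rw [show ((n:ℝ)^2 + (m:ℝ)^2 + 1) = (m:ℝ)^2 + s by rw [hsdef]; ring]
      rw [eG]
      have esplit : ((m:ℝ)^2+s) ^ (2*α-1)
          = ((m:ℝ)^2+s) ^ (2*α-1/4) * ((m:ℝ)^2+s) ^ (-(3/4) : ℝ) := by
        rw [← Real.rpow_add hb0]
        congr 1
        ring
      have p1 : ((m:ℝ)^2+s) ^ (2*α-1/4) ≤ s ^ (2*α-1/4) :=
        Real.rpow_le_rpow_of_nonpos hs0 hsb (by linarith)
      have p2 : Real.exp (-((((m:ℝ)^2+s) ^ α))/3) ≤ Real.exp (-(s ^ α)/3) := by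
        apply Real.exp_le_exp.mpr
        have : s ^ α ≤ ((m:ℝ)^2+s) ^ α := Real.rpow_le_rpow hs0.le hsb hα0.le
        linarith
      have hnn1 : (0:ℝ) ≤ ((m:ℝ)^2+s) ^ (-(3/4) : ℝ) := Real.rpow_nonneg hb0.le _
      have hnn2 : (0:ℝ) ≤ ((m:ℝ)^2+s) ^ (2*α-1/4) := Real.rpow_nonneg hb0.le _
      calc 36 * α^2 * (((m:ℝ)^2+s) ^ (2*α-1)) * Real.exp (-((((m:ℝ)^2+s) ^ α))/3)
          = (36 * α^2 * ((m:ℝ)^2+s) ^ (2*α-1/4) * Real.exp (-((((m:ℝ)^2+s) ^ α))/3))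
            * ((m:ℝ)^2+s) ^ (-(3/4) : ℝ) := by rw [esplit]; ring
        _ ≤ (36 * α^2 * s ^ (2*α-1/4) * Real.exp (-(s ^ α)/3))
            * ((m:ℝ)^2+s) ^ (-(3/4) : ℝ) := by
            apply mul_le_mul_of_nonneg_right _ hnn1
            apply mul_le_mul (mul_le_mul_of_nonneg_left p1 (by positivity)) p2
              (Real.exp_nonneg _)
            apply mul_nonneg (by positivity) (Real.rpow_nonneg hs0.le _)
        _ = c0 * ((m:ℝ)^2+s) ^ (-(3/4) : ℝ) := by rw [hc0def]
    have hGnn : ∀ m : ℤ, 0 ≤ G (n, m) := fun m => hG0 _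
    have hsumG : Summable (fun m : ℤ => G (n, m)) :=
      Summable.of_nonneg_of_le hGnn hcomp (hBs.mul_left c0)
    refine ⟨hsumG, ?_⟩
    have step1 : ∑' m : ℤ, G (n, m) ≤ ∑' m : ℤ, c0 * ((m:ℝ)^2+s) ^ (-(3/4) : ℝ) :=
      Summable.tsum_le_tsum hcomp hsumG (hBs.mul_left c0)
    have step2 : ∑' m : ℤ, c0 * ((m:ℝ)^2+s) ^ (-(3/4) : ℝ)
        = c0 * ∑' m : ℤ, ((m:ℝ)^2+s) ^ (-(3/4) : ℝ) := tsum_mul_left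
    have step3 : c0 * ∑' m : ℤ, ((m:ℝ)^2+s) ^ (-(3/4) : ℝ)
        ≤ c0 * (9 * s ^ (-(1/4):ℝ)) := mul_le_mul_of_nonneg_left hBl hc00
    have step4 : c0 * (9 * s ^ (-(1/4):ℝ))
        = 324 * α^2 * (s ^ (2*α-1/4) * s ^ (-(1/4):ℝ)) * Real.exp (-(s ^ α)/3) := by
      rw [hc0def]
      ring
    have step5 : s ^ (2*α-1/4) * s ^ (-(1/4):ℝ) = s ^ (2*α-1/2) := by
      rw [← Real.rpow_add hs0]
      congr 1
      ring
    calc ∑' m : ℤ, G (n, m) ≤ c0 * (9 * s ^ (-(1/4):ℝ)) := by linarith [step1, step2 ▸ step3]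
      _ = 324 * α^2 * (s ^ (2*α-1/2) * Real.exp (-(s ^ α)/3)) := by
          rw [step4, step5]
          ring
  -- outer sum
  obtain ⟨hCs, hCl⟩ := sum_C_int hα0 hα8
  set K : ℤ → ℝ := fun n =>
    324 * α^2 * (((n:ℝ)^2+1) ^ (2*α-1/2) * Real.exp (-(((n:ℝ)^2+1) ^ α)/3)) with hKdef
  have hsumK : Summable K := hCs.mul_left _
  have houter : Summable (fun n : ℤ => ∑' m : ℤ, G (n, m)) :=
    Summable.of_nonneg_of_le (fun n => tsum_nonneg (fun m => hG0 _))
      (fun n => (inner n).2) hsumK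
  have hsumG2 : Summable G := by
    rw [summable_prod_of_nonneg hG0]
    exact ⟨fun n => (inner n).1, houter⟩
  have hle1 : ∑' p : ℤ × ℤ, G p ≤ 4860 * α := by
    rw [Summable.tsum_prod' hsumG2 (fun n => (inner n).1)]
    have h1 : ∑' n : ℤ, ∑' m : ℤ, G (n, m) ≤ ∑' n : ℤ, K n :=
      Summable.tsum_le_tsum (fun n => (inner n).2) houter hsumK
    have h2 : ∑' n : ℤ, K n
        = 324 * α^2 * ∑' n : ℤ, (((n:ℝ)^2+1) ^ (2*α-1/2)
            * Real.exp (-(((n:ℝ)^2+1) ^ α)/3)) := tsum_mul_left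
    have h3 : (324 : ℝ) * α^2 * ∑' n : ℤ, (((n:ℝ)^2+1) ^ (2*α-1/2)
        * Real.exp (-(((n:ℝ)^2+1) ^ α)/3)) ≤ 324 * α^2 * (15/α) :=
      mul_le_mul_of_nonneg_left hCl (by positivity)
    have h4 : (324 : ℝ) * α^2 * (15/α) = 4860 * α := by
      field_simp
      ring
    linarith [h2 ▸ h1]
  -- compare with the original sum
  have hterm : ∀ p : ℤ × ℤ,
      (Real.exp (-((((p.1 : ℝ) + 1) ^ 2 + (p.2 : ℝ) ^ 2 + 1) ^ α))
        - Real.exp (-(((p.1 : ℝ) ^ 2 + (p.2 : ℝ) ^ 2 + 1) ^ α))) ^ 2 ≤ G p :=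
    fun p => pointA hα0 hα8 p.1 p.2
  have hsumT : Summable (fun p : ℤ × ℤ =>
      (Real.exp (-((((p.1 : ℝ) + 1) ^ 2 + (p.2 : ℝ) ^ 2 + 1) ^ α))
        - Real.exp (-(((p.1 : ℝ) ^ 2 + (p.2 : ℝ) ^ 2 + 1) ^ α))) ^ 2) :=
    Summable.of_nonneg_of_le (fun p => sq_nonneg _) hterm hsumG2
  exact (Summable.tsum_le_tsum hterm hsumT hsumG2).trans hle1

theorem stmt_10 :
    Filter.Tendsto
      (fun α : ℝ => ∑' p : ℤ × ℤ,
        (Real.exp (-((((p.1 : ℝ) + 1) ^ 2 + (p.2 : ℝ) ^ 2 + 1) ^ α))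
          - Real.exp (-(((p.1 : ℝ) ^ 2 + (p.2 : ℝ) ^ 2 + 1) ^ α))) ^ 2)
      (nhdsWithin 0 (Set.Ioi 0)) (nhds 0) := by
  have hup : Tendsto (fun α : ℝ => 4860 * α) (nhdsWithin 0 (Set.Ioi 0)) (nhds 0) := by
    have h : Tendsto (fun α : ℝ => 4860 * α) (nhds 0) (nhds 0) := by
      have h2 : Continuous (fun α : ℝ => 4860 * α) := by continuity
      simpa using h2.tendsto (0:ℝ)
    exact h.mono_left nhdsWithin_le_nhds
  apply tendsto_of_tendsto_of_tendsto_of_le_of_le' tendsto_const_nhds hup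
  · filter_upwards with α
    exact tsum_nonneg (fun p => sq_nonneg _)
  · filter_upwards [Ioc_mem_nhdsGT_of_mem (by norm_num : (0:ℝ) ∈ Ico 0 (1/8))] with α hα
    exact main_bound hα.1 hα.2
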